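/- Let U ⊆ ℝ² be open, let a : ℝ → ℝ be smooth, let b : U → ℝ be smooth, and let D be the connection on U whose only nonzero Christoffel symbols are Γ¹_{12}(x¹,x²) = Γ¹_{21}(x¹,x²) = a(x²) and Γ¹_{22}(x¹,x²) = b(x¹,x²) (a connection with symmetric rank-one Ricci tensor and parallel kernel). If h : U → ℝ is smooth, depends only on x² (∂_1 h = 0), and satisfies ∂_2∂_2 h(x¹,x²) = 2 a'(x²) + 2 a(x²)² − 2 ∂_1 b(x¹,x²) on U, then h satisfies the affine gradient Ricci soliton equation Hes_h(∂_i,∂_j) + 2ρ^{sym}_{ij} = 0 on U for all i,j ∈ {1,2}. -/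

import Mathlib

noncomputable section

/-- Points of the affine surface (local coordinates `(x¹,x²)`). -/
abbrev Pt2 := Fin 2 → ℝ

/-- Partial derivative `∂_{x^i}`. -/
def pd2 (i : Fin 2) (f : Pt2 → ℝ) (p : Pt2) : ℝ :=
  fderiv ℝ f p (Pi.single i 1)

/-- The Ricci tensor `ρ_{ij}` of the affine connection with Christoffel symbols `Γ^k_{ij}`:
`ρ_{ij} = Σ_k ∂_{x^k}Γ^k_{ij} − ∂_{x^i}(Σ_k Γ^k_{kj}) + Σ_{k,l}(Γ^k_{kl}Γ^l_{ij} − Γ^k_{il}Γ^l_{kj})`. -/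
def ricciD (Γ : Fin 2 → Fin 2 → Fin 2 → Pt2 → ℝ) (i j : Fin 2) (p : Pt2) : ℝ :=
  (∑ k : Fin 2, pd2 k (Γ k i j) p) - pd2 i (fun q => ∑ k : Fin 2, Γ k k j q) p
    + ∑ k : Fin 2, ∑ l : Fin 2, (Γ k k l p * Γ l i j p - Γ k i l p * Γ l k j p)

/-- The symmetric part `ρ^{sym}_{ij} = ½(ρ_{ij}+ρ_{ji})` of the Ricci tensor. -/
def ricciDSym (Γ : Fin 2 → Fin 2 → Fin 2 → Pt2 → ℝ) (i j : Fin 2) (p : Pt2) : ℝ :=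
  (ricciD Γ i j p + ricciD Γ j i p) / 2

/-- The affine Hessian `Hes_h(∂_i,∂_j) = ∂_i∂_j h − Σ_k Γ^k_{ij} ∂_k h`. -/
def hessD (Γ : Fin 2 → Fin 2 → Fin 2 → Pt2 → ℝ) (h : Pt2 → ℝ) (i j : Fin 2) (p : Pt2) : ℝ :=
  pd2 i (pd2 j h) p - ∑ k : Fin 2, Γ k i j p * pd2 k h p

/-- The covariant derivative of the Ricci tensor:
`(D_{∂_i}ρ)_{jk} = ∂_i ρ_{jk} − Σ_l Γ^l_{ij} ρ_{lk} − Σ_l Γ^l_{ik} ρ_{jl}`. -/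
def covRicciD (Γ : Fin 2 → Fin 2 → Fin 2 → Pt2 → ℝ) (i j k : Fin 2) (p : Pt2) : ℝ :=
  pd2 i (fun q => ricciD Γ j k q) p - (∑ l : Fin 2, Γ l i j p * ricciD Γ l k p)
    - ∑ l : Fin 2, Γ l i k p * ricciD Γ j l p

/-- The connection whose only nonzero Christoffel symbols are
`Γ¹_{12} = Γ¹_{21} = a(x²)` and `Γ¹_{22} = b(x¹,x²)`
(symmetric rank-one Ricci tensor with parallel kernel). -/
def ΓK (a : ℝ → ℝ) (b : Pt2 → ℝ) : Fin 2 → Fin 2 → Fin 2 → Pt2 → ℝ := fun k i j x =>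
  if k = 0 ∧ ((i = 0 ∧ j = 1) ∨ (i = 1 ∧ j = 0)) then a (x 1)
  else if k = 0 ∧ i = 1 ∧ j = 1 then b x
  else 0


section Aux
variable {a : ℝ → ℝ} {b : Pt2 → ℝ}

lemma pd2_zero_fun (i : Fin 2) (p : Pt2) : pd2 i (fun _ : Pt2 => (0:ℝ)) p = 0 := by
  simp [pd2]

lemma pd2_comp1 (ha : ContDiff ℝ (⊤ : ℕ∞) a) (i : Fin 2) (p : Pt2) :
    pd2 i (fun x : Pt2 => a (x 1)) p = deriv a (p 1) * (Pi.single i (1:ℝ) : Pt2) 1 := by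
  have hd : HasDerivAt a (deriv a (p 1)) (p 1) := (ha.differentiable (by simp) (p 1)).hasDerivAt
  have hproj := (ContinuousLinearMap.proj (R := ℝ) (φ := fun _ : Fin 2 => ℝ) 1).hasFDerivAt (x := p)
  have H := hd.comp_hasFDerivAt p hproj
  have H' : HasFDerivAt (fun x : Pt2 => a (x 1))
      (deriv a (p 1) • ContinuousLinearMap.proj (R := ℝ) (φ := fun _ : Fin 2 => ℝ) 1) p := H
  rw [pd2, H'.fderiv]
  simp

lemma pd2_second_eq {h : Pt2 → ℝ} {x : Pt2} (hd : DifferentiableAt ℝ (fderiv ℝ h) x)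
    (i j : Fin 2) :
    pd2 i (pd2 j h) x = fderiv ℝ (fderiv ℝ h) x (Pi.single i 1) (Pi.single j 1) := by
  unfold pd2
  rw [fderiv_clm_apply hd (differentiableAt_const (Pi.single j 1 : Pt2))]
  simp

lemma ΓK000 : ΓK a b 0 0 0 = fun _ => 0 := by funext x; simp [ΓK]
lemma ΓK001 : ΓK a b 0 0 1 = fun x => a (x 1) := by funext x; simp [ΓK]
lemma ΓK010 : ΓK a b 0 1 0 = fun x => a (x 1) := by funext x; simp [ΓK]
lemma ΓK011 : ΓK a b 0 1 1 = b := by funext x; simp [ΓK]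
lemma ΓK1 (i j : Fin 2) : ΓK a b 1 i j = fun _ => 0 := by funext x; simp [ΓK]

lemma ricci00 (p : Pt2) : ricciD (ΓK a b) 0 0 p = 0 := by
  simp only [ricciD, Fin.sum_univ_two, ΓK000, ΓK001, ΓK010, ΓK011, ΓK1]
  simp [pd2_zero_fun, ΓK]

lemma ricci01 (ha : ContDiff ℝ (⊤ : ℕ∞) a) (p : Pt2) : ricciD (ΓK a b) 0 1 p = 0 := by
  simp only [ricciD, Fin.sum_univ_two, ΓK000, ΓK001, ΓK010, ΓK011, ΓK1]
  simp [pd2_zero_fun, pd2_comp1 ha, Pi.single_apply, ΓK]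

lemma ricci10 (ha : ContDiff ℝ (⊤ : ℕ∞) a) (p : Pt2) : ricciD (ΓK a b) 1 0 p = 0 := by
  simp only [ricciD, Fin.sum_univ_two, ΓK000, ΓK001, ΓK010, ΓK011, ΓK1]
  simp [pd2_zero_fun, pd2_comp1 ha, Pi.single_apply, ΓK]

lemma ricci11 (ha : ContDiff ℝ (⊤ : ℕ∞) a) (p : Pt2) :
    ricciD (ΓK a b) 1 1 p = pd2 0 b p - deriv a (p 1) - (a (p 1))^2 := by
  simp only [ricciD, Fin.sum_univ_two, ΓK000, ΓK001, ΓK010, ΓK011, ΓK1]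
  simp [pd2_zero_fun, pd2_comp1 ha, Pi.single_apply, ΓK]
  ring

end Aux

/-- If `h` depends only on `x²` and satisfies
`∂₂∂₂ h = 2a' + 2a² − 2 ∂₁b` on `U`, then `h` is an affine gradient Ricci soliton
potential for the connection `ΓK a b` on `U`. -/
theorem stmt15 (U : Set Pt2) (hU : IsOpen U)
    (a : ℝ → ℝ) (ha : ContDiff ℝ (⊤ : ℕ∞) a)
    (b : Pt2 → ℝ) (hb : ContDiffOn ℝ (⊤ : ℕ∞) b U)
    (h : Pt2 → ℝ) (hh : ContDiffOn ℝ (⊤ : ℕ∞) h U)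
    (hdep : ∀ x ∈ U, pd2 0 h x = 0)
    (hODE : ∀ x ∈ U, pd2 1 (pd2 1 h) x
      = 2 * deriv a (x 1) + 2 * (a (x 1)) ^ 2 - 2 * pd2 0 b x) :
    ∀ x ∈ U, ∀ i j : Fin 2,
      hessD (ΓK a b) h i j x + 2 * ricciDSym (ΓK a b) i j x = 0 := by
  intro x hx i j
  have hmem : U ∈ nhds x := hU.mem_nhds hx
  have hev0 : pd2 0 h =ᶠ[nhds x] (fun _ => (0:ℝ)) := Filter.eventuallyEq_of_mem hmem hdep
  have hA : ∀ i : Fin 2, pd2 i (pd2 0 h) x = 0 := by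
    intro i
    have he : fderiv ℝ (pd2 0 h) x = fderiv ℝ (fun _ : Pt2 => (0:ℝ)) x := hev0.fderiv_eq
    show fderiv ℝ (pd2 0 h) x (Pi.single i 1) = 0
    rw [he]
    simp
  have hc : ContDiffAt ℝ (⊤ : ℕ∞) h x := hh.contDiffAt hmem
  have hd2 : DifferentiableAt ℝ (fderiv ℝ h) x :=
    (hc.fderiv_right (m := 1) (WithTop.coe_le_coe.mpr le_top)).differentiableAt one_ne_zero
  have hsym : IsSymmSndFDerivAt ℝ h x := hc.isSymmSndFDerivAt (by rw [minSmoothness_of_isRCLikeNormedField]; exact WithTop.coe_le_coe.mpr le_top)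
  have hB : pd2 0 (pd2 1 h) x = 0 := by
    rw [pd2_second_eq hd2, hsym, ← pd2_second_eq hd2]
    exact hA 1
  have hO := hODE x hx
  have hd0 := hdep x hx
  fin_cases i <;> fin_cases j <;>
    simp [hessD, ricciDSym, ricci00, ricci01 ha, ricci10 ha, ricci11 ha,
      Fin.sum_univ_two, ΓK, hA, hB, hd0] <;>
    linarith

end
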